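/- arXiv:2205.09264 — 3 statements merged into one kernel-verified Lean document; each statement's English description precedes it below -/
import Mathlib

section
/- Let (F, G) be an adjoint pair F : A ⟶ B, G : B ⟶ A, and let C be a full subcategory of A that is contravariantly finite in A (every object of A admits a right C-approximation). Then the essential image F(C) is contravariantly finite in B: for every B-object Y, the morphism ε_Y ∘ F(f) : F(C) ⟶ Y is a right F(C)-approximation, where f : C ⟶ G(Y) is a right C-approximation of G(Y). -/
open CategoryTheory

variable {A B : Type*} [Category A] [Category B]

/-- `f : c ⟶ M` is a right `C`-approximation: `c ∈ C` and every morphism from an object of `C`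
to `M` factors through `f`. -/
def IsRightApprox (C : Set A) {c M : A} (f : c ⟶ M) : Prop :=
  c ∈ C ∧ ∀ c' ∈ C, ∀ g : c' ⟶ M, ∃ h : c' ⟶ c, h ≫ f = g

/-- `C` is contravariantly finite: every object admits a right `C`-approximation. -/
def ContravariantlyFinite (C : Set A) : Prop :=
  ∀ M : A, ∃ (c : A) (f : c ⟶ M), IsRightApprox C f

/-- The essential image of a class of objects under a functor. -/
def imCl (F : A ⥤ B) (C : Set A) : Set B :=
  {b | ∃ a ∈ C, Nonempty (F.obj a ≅ b)}

/-- If `(F, G)` is an adjoint pair and `C` is contravariantly finite in `A`, then `F(C)` is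
contravariantly finite in `B`; moreover for any `Y`, if `f : c ⟶ G(Y)` is a right
`C`-approximation then `ε_Y ∘ F(f)` is a right `F(C)`-approximation of `Y`. -/
theorem contravariantlyFinite_image_of_adjunction
    (F : A ⥤ B) (G : B ⥤ A) (adj : F ⊣ G)
    (C : Set A) (hC : ContravariantlyFinite C) :
    ContravariantlyFinite (imCl F C) ∧
    ∀ (Y : B) (c : A) (f : c ⟶ G.obj Y), IsRightApprox C f →
      IsRightApprox (imCl F C) (F.map f ≫ adj.counit.app Y) := by

  have key : ∀ (Y : B) (c : A) (f : c ⟶ G.obj Y), IsRightApprox C f →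
      IsRightApprox (imCl F C) (F.map f ≫ adj.counit.app Y) := by
    intro Y c f hf
    refine ⟨⟨c, hf.1, ⟨Iso.refl _⟩⟩, ?_⟩
    rintro b' ⟨a, ha, ⟨e⟩⟩ g
    obtain ⟨h, hh⟩ := hf.2 a ha (adj.homEquiv a Y (e.hom ≫ g))
    refine ⟨e.inv ≫ F.map h, ?_⟩
    have := congrArg (adj.homEquiv a Y).symm hh
    rw [Equiv.symm_apply_apply, adj.homEquiv_counit, F.map_comp, Category.assoc] at this
    simp only [Category.assoc, this]
    simp
  exact ⟨fun Y => by
    obtain ⟨c, f, hf⟩ := hC (G.obj Y)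
    exact ⟨F.obj c, F.map f ≫ adj.counit.app Y, key Y c f hf⟩, key⟩
end

section
/- Let (F, G) be an adjoint pair with G faithful, and let C be an admissible contravariantly finite subcategory of A (every right C-approximation is an epimorphism). If F preserves epimorphisms, then F(C) is an admissible contravariantly finite subcategory of B. -/
open CategoryTheory

variable {A B : Type*} [Category A] [Category B]

/-- `C` is admissible: every right `C`-approximation is an epimorphism. -/
def AdmissibleClass (C : Set A) : Prop :=
  ∀ (M c : A) (f : c ⟶ M), IsRightApprox C f → Epi f

/-- If `(F, G)` is an adjoint pair between abelian categories with `G` faithful, `F` preserves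
epimorphisms, and `C` is an admissible contravariantly finite subcategory of `A`, then `F(C)`
is an admissible contravariantly finite subcategory of `B`. -/
theorem admissible_image_of_adjunction [Abelian A] [Abelian B]
    (F : A ⥤ B) (G : B ⥤ A) (adj : F ⊣ G) (hG : G.Faithful)
    (hF : ∀ {X Y : A} (f : X ⟶ Y), Epi f → Epi (F.map f))
    (C : Set A) (hC : ContravariantlyFinite C) (hadm : AdmissibleClass C) :
    ContravariantlyFinite (imCl F C) ∧ AdmissibleClass (imCl F C) := by
  -- For each M : B, construct a canonical right approximation which is epi.
  have key : ∀ M : B, ∃ (c : B) (f : c ⟶ M), IsRightApprox (imCl F C) f ∧ Epi f := by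
    intro M
    obtain ⟨c₀, f₀, hf₀⟩ := hC (G.obj M)
    refine ⟨F.obj c₀, F.map f₀ ≫ adj.counit.app M, ⟨⟨c₀, hf₀.1, ⟨Iso.refl _⟩⟩, ?_⟩, ?_⟩
    · rintro c' ⟨a, ha, ⟨e⟩⟩ g
      obtain ⟨h, hh⟩ := hf₀.2 a ha (adj.homEquiv _ _ (e.hom ≫ g))
      refine ⟨e.inv ≫ F.map h, ?_⟩
      have : F.map (h ≫ f₀) ≫ adj.counit.app M = e.hom ≫ g := by
        have h2 := (adj.homEquiv a M).symm_apply_apply (e.hom ≫ g)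
        rw [Adjunction.homEquiv_counit] at h2
        rw [hh]; exact h2
      rw [F.map_comp] at this
      rw [Category.assoc, ← Category.assoc (F.map h), this, ← Category.assoc,
        e.inv_hom_id, Category.id_comp]
    · have h1 : Epi (F.map f₀) := hF f₀ (hadm _ _ f₀ hf₀)
      have h2 : Epi (adj.counit.app M) := adj.counit_epi_of_R_faithful M
      exact epi_comp _ _
  constructor
  · intro M
    obtain ⟨c, f, hf, _⟩ := key M
    exact ⟨c, f, hf⟩
  · intro M c f hf
    obtain ⟨c₀, f₀, hf₀, he⟩ := key M
    obtain ⟨h, hh⟩ := hf.2 c₀ hf₀.1 f₀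
    exact epi_of_epi_fac hh
end

section
/- In a recollement R(A', A, A'') of abelian categories, if the functor i* is exact, then i^! ∘ j_! = 0 and j_! is exact; dually, if i^! is exact, then i* ∘ j_* = 0 and j_* is exact. -/
open CategoryTheory CategoryTheory.Limits

/-- A recollement of abelian categories `R(A', A, A'')`: adjoint triples
`(i*, i_*, i^!)` and `(j_!, j*, j_*)`, with `i_*, j_!, j_*` fully faithful and
`Im i_* = Ker j*`. -/
structure Recollement (A' : Type*) (A : Type*) (A'' : Type*)
    [Category A'] [Category A] [Category A''] where
  /-- `i_* : A' ⥤ A` -/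
  iₛ : A' ⥤ A
  /-- `i* : A ⥤ A'` -/
  iStar : A ⥤ A'
  /-- `i^! : A ⥤ A'` -/
  iShriek : A ⥤ A'
  /-- `j_! : A'' ⥤ A` -/
  jLShriek : A'' ⥤ A
  /-- `j* : A ⥤ A''` -/
  jStar : A ⥤ A''
  /-- `j_* : A'' ⥤ A` -/
  jₛ : A'' ⥤ A
  adj₁ : iStar ⊣ iₛ
  adj₂ : iₛ ⊣ iShriek
  adj₃ : jLShriek ⊣ jStar
  adj₄ : jStar ⊣ jₛ
  ff_iₛ : iₛ.FullyFaithful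
  ff_jLShriek : jLShriek.FullyFaithful
  ff_jₛ : jₛ.FullyFaithful
  im_eq_ker : ∀ X : A, (∃ Y : A', Nonempty (iₛ.obj Y ≅ X)) ↔ IsZero (jStar.obj X)

set_option linter.unusedSectionVars false

section Aux

variable {A' A A'' : Type*} [Category A'] [Category A] [Category A'']
  [Abelian A'] [Abelian A] [Abelian A''] (R : Recollement A' A A'')

/-- `j* ∘ i_* = 0`. -/
lemma jStar_iₛ_isZero (Y : A') : IsZero (R.jStar.obj (R.iₛ.obj Y)) :=
  (R.im_eq_ker _).1 ⟨Y, ⟨Iso.refl _⟩⟩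

/-- `i* ∘ j_! = 0` (always). -/
lemma iStar_jLShriek_isZero (X : A'') : IsZero (R.iStar.obj (R.jLShriek.obj X)) := by
  rw [IsZero.iff_id_eq_zero]
  exact (R.adj₁.homEquiv _ _).injective
    ((R.adj₃.homEquiv _ _).injective ((jStar_iₛ_isZero R _).eq_of_tgt _ _))

/-- `i^! ∘ j_* = 0` (always). -/
lemma iShriek_jₛ_isZero (X : A'') : IsZero (R.iShriek.obj (R.jₛ.obj X)) := by
  rw [IsZero.iff_id_eq_zero]
  exact (R.adj₂.homEquiv _ _).symm.injective
    ((R.adj₄.homEquiv _ _).symm.injective ((jStar_iₛ_isZero R _).eq_of_src _ _))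

/-- If `i*` preserves monos, any map from an object of `Ker j*` to an object `j_! X` vanishes. -/
lemma hom_eq_zero_left [R.iStar.PreservesMonomorphisms]
    {K : A} (hK : IsZero (R.jStar.obj K)) {X : A''} (f : K ⟶ R.jLShriek.obj X) : f = 0 := by
  haveI := R.adj₄.leftAdjoint_preservesColimits
  have h1 : IsZero (R.jStar.obj (image f)) :=
    IsZero.of_epi (R.jStar.map (factorThruImage f)) hK
  obtain ⟨W, ⟨e⟩⟩ := (R.im_eq_ker (image f)).2 h1
  have h2 : IsZero (R.iStar.obj (image f)) :=
    IsZero.of_mono (R.iStar.map (image.ι f)) (iStar_jLShriek_isZero R X)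
  haveI := R.ff_iₛ.full
  haveI := R.ff_iₛ.faithful
  have h3 : IsZero W :=
    (h2.of_iso (R.iStar.mapIso e)).of_iso (asIso (R.adj₁.counit.app W)).symm
  have h4 : IsZero (image f) := by
    haveI := R.adj₂.isLeftAdjoint
    refine IsZero.of_iso ?_ e.symm
    rw [IsZero.iff_id_eq_zero] at h3 ⊢
    rw [← R.iₛ.map_id, h3, Functor.map_zero]
  rw [← image.fac f, h4.eq_of_src (image.ι f) 0, comp_zero]

/-- If `i^!` preserves epis, any map from an object `j_* X` to an object of `Ker j*` vanishes. -/
lemma hom_eq_zero_right [R.iShriek.PreservesEpimorphisms]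
    {K : A} (hK : IsZero (R.jStar.obj K)) {X : A''} (f : R.jₛ.obj X ⟶ K) : f = 0 := by
  haveI := R.adj₃.rightAdjoint_preservesLimits
  have h1 : IsZero (R.jStar.obj (image f)) :=
    IsZero.of_mono (R.jStar.map (image.ι f)) hK
  obtain ⟨W, ⟨e⟩⟩ := (R.im_eq_ker (image f)).2 h1
  have h2 : IsZero (R.iShriek.obj (image f)) :=
    IsZero.of_epi (R.iShriek.map (factorThruImage f)) (iShriek_jₛ_isZero R X)
  haveI := R.ff_iₛ.full
  haveI := R.ff_iₛ.faithful
  have h3 : IsZero W :=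
    (h2.of_iso (R.iShriek.mapIso e)).of_iso (asIso (R.adj₂.unit.app W))
  have h4 : IsZero (image f) := by
    haveI := R.adj₂.isLeftAdjoint
    refine IsZero.of_iso ?_ e.symm
    rw [IsZero.iff_id_eq_zero] at h3 ⊢
    rw [← R.iₛ.map_id, h3, Functor.map_zero]
  rw [← image.fac f, h4.eq_of_src (image.ι f) 0, comp_zero]

/-- If `i*` is exact then `i^! ∘ j_! = 0`. -/
lemma iShriek_jLShriek_isZero [R.iStar.PreservesMonomorphisms] (X : A'') :
    IsZero (R.iShriek.obj (R.jLShriek.obj X)) := by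
  rw [IsZero.iff_id_eq_zero]
  exact (R.adj₂.homEquiv _ _).symm.injective
    ((hom_eq_zero_left R (jStar_iₛ_isZero R _) _).trans
      (hom_eq_zero_left R (jStar_iₛ_isZero R _) _).symm)

/-- If `i^!` is exact then `i* ∘ j_* = 0`. -/
lemma iStar_jₛ_isZero [R.iShriek.PreservesEpimorphisms] (X : A'') :
    IsZero (R.iStar.obj (R.jₛ.obj X)) := by
  rw [IsZero.iff_id_eq_zero]
  exact (R.adj₁.homEquiv _ _).injective
    ((hom_eq_zero_right R (jStar_iₛ_isZero R _) _).trans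
      (hom_eq_zero_right R (jStar_iₛ_isZero R _) _).symm)

lemma jLShriek_preservesMono [R.iStar.PreservesMonomorphisms] :
    R.jLShriek.PreservesMonomorphisms := by
  constructor
  intro X Y g hg
  haveI := R.adj₃.rightAdjoint_preservesLimits
  haveI := R.adj₄.isLeftAdjoint
  haveI := R.ff_jLShriek.full
  haveI := R.ff_jLShriek.faithful
  apply Abelian.mono_of_kernel_ι_eq_zero
  refine hom_eq_zero_left R ?_ (kernel.ι (R.jLShriek.map g))
  have hm : Mono (R.jStar.map (R.jLShriek.map g)) := by
    have heq : R.jStar.map (R.jLShriek.map g)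
        = inv (R.adj₃.unit.app X) ≫ (g ≫ R.adj₃.unit.app Y) := by
      rw [IsIso.eq_inv_comp]
      exact (R.adj₃.unit.naturality g).symm
    rw [heq]
    exact mono_comp _ _
  have h0 : IsZero (kernel (R.jStar.map (R.jLShriek.map g))) :=
    IsZero.of_mono_eq_zero _ (kernel.ι_of_mono _)
  exact h0.of_iso (PreservesKernel.iso R.jStar _)

lemma jₛ_preservesEpi [R.iShriek.PreservesEpimorphisms] :
    R.jₛ.PreservesEpimorphisms := by
  constructor
  intro X Y g hg
  haveI := R.adj₄.leftAdjoint_preservesColimits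
  haveI := R.adj₄.isLeftAdjoint
  haveI := R.ff_jₛ.full
  haveI := R.ff_jₛ.faithful
  apply Abelian.epi_of_cokernel_π_eq_zero
  refine hom_eq_zero_right R ?_ (cokernel.π (R.jₛ.map g))
  have he : Epi (R.jStar.map (R.jₛ.map g)) := by
    have heq : R.jStar.map (R.jₛ.map g)
        = (R.adj₄.counit.app X ≫ g) ≫ inv (R.adj₄.counit.app Y) := by
      rw [IsIso.eq_comp_inv]
      exact R.adj₄.counit.naturality g
    rw [heq]
    exact epi_comp _ _
  have h0 : IsZero (cokernel (R.jStar.map (R.jₛ.map g))) :=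
    IsZero.of_epi_eq_zero _ (cokernel.π_of_epi _)
  exact h0.of_iso (PreservesCokernel.iso R.jStar _)

lemma jLShriek_preservesFiniteLimits [R.iStar.PreservesMonomorphisms] :
    PreservesFiniteLimits R.jLShriek := by
  haveI : PreservesColimitsOfSize.{0, 0} R.jLShriek := R.adj₃.leftAdjoint_preservesColimits
  haveI := R.adj₃.isLeftAdjoint
  haveI := jLShriek_preservesMono R
  haveI := preservesBinaryBiproducts_of_preservesBinaryCoproducts R.jLShriek
  haveI : R.jLShriek.Additive := Functor.additive_of_preservesBinaryBiproducts R.jLShriek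
  haveI : R.jLShriek.PreservesHomology :=
    Functor.preservesHomology_of_preservesMonos_and_cokernels R.jLShriek
  exact Functor.preservesFiniteLimits_of_preservesHomology R.jLShriek

lemma jₛ_preservesFiniteColimits [R.iShriek.PreservesEpimorphisms] :
    PreservesFiniteColimits R.jₛ := by
  haveI : PreservesLimitsOfSize.{0, 0} R.jₛ := R.adj₄.rightAdjoint_preservesLimits
  haveI := R.adj₄.isRightAdjoint
  haveI := jₛ_preservesEpi R
  haveI := preservesBinaryBiproducts_of_preservesBinaryProducts R.jₛ
  haveI : R.jₛ.Additive := Functor.additive_of_preservesBinaryBiproducts R.jₛ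
  haveI : R.jₛ.PreservesHomology :=
    Functor.preservesHomology_of_preservesEpis_and_kernels R.jₛ
  exact Functor.preservesFiniteColimits_of_preservesHomology R.jₛ

end Aux

/-- In a recollement of abelian categories: if `i*` is exact, then `i^! ∘ j_! = 0` and `j_!`
is exact; dually, if `i^!` is exact, then `i* ∘ j_* = 0` and `j_*` is exact. -/
theorem recollement_exactness {A' A A'' : Type*}
    [Category A'] [Category A] [Category A'']
    [Abelian A'] [Abelian A] [Abelian A'']
    (R : Recollement A' A A'') :
    ((Nonempty (PreservesFiniteLimits R.iStar) ∧ Nonempty (PreservesFiniteColimits R.iStar)) →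
      (∀ X : A'', IsZero (R.iShriek.obj (R.jLShriek.obj X))) ∧
      Nonempty (PreservesFiniteLimits R.jLShriek) ∧
      Nonempty (PreservesFiniteColimits R.jLShriek)) ∧
    ((Nonempty (PreservesFiniteLimits R.iShriek) ∧ Nonempty (PreservesFiniteColimits R.iShriek)) →
      (∀ X : A'', IsZero (R.iStar.obj (R.jₛ.obj X))) ∧
      Nonempty (PreservesFiniteLimits R.jₛ) ∧
      Nonempty (PreservesFiniteColimits R.jₛ)) := by
  constructor
  · rintro ⟨⟨hl⟩, -⟩
    haveI := hl
    haveI : R.iStar.PreservesMonomorphisms := inferInstance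
    haveI : PreservesColimitsOfSize.{0, 0} R.jLShriek := R.adj₃.leftAdjoint_preservesColimits
    exact ⟨iShriek_jLShriek_isZero R, ⟨jLShriek_preservesFiniteLimits R⟩, ⟨inferInstance⟩⟩
  · rintro ⟨-, ⟨hc⟩⟩
    haveI := hc
    haveI : R.iShriek.PreservesEpimorphisms := inferInstance
    haveI : PreservesLimitsOfSize.{0, 0} R.jₛ := R.adj₄.rightAdjoint_preservesLimits
    exact ⟨iStar_jₛ_isZero R, ⟨inferInstance⟩, ⟨jₛ_preservesFiniteColimits R⟩⟩
end
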